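/- arXiv:2505.05126 — 7 statements merged into one kernel-verified Lean document; each statement's English description precedes it below -/
import Mathlib

section
/- For every y ∈ ℝ, the expectile loss g is differentiable at y with derivative g'(y) = −2·∑ᵢ wᵢ·|τ − 1{xᵢ < y}|·(xᵢ − y); in particular g is differentiable on all of ℝ. -/
open Finset

noncomputable def expectileLoss {ι : Type*} [Fintype ι] (τ : ℝ) (w x : ι → ℝ) (y : ℝ) : ℝ :=
  ∑ i, w i * (|τ - (if x i - y < 0 then (1 : ℝ) else 0)| * (x i - y) ^ 2)

theorem hasDerivAt_const_mul_sq (c u : ℝ) :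
    HasDerivAt (fun v : ℝ => c * v ^ 2) (2 * (c * u)) u :=
  ((hasDerivAt_pow 2 u).const_mul c).congr_deriv (by ring)

/-- At `0` the two parabolas `a v²` and `b v²` share the value `0` and the slope `0`, so the
one-sided derivatives glue. -/
theorem hasDerivAt_ite_neg_mul_sq (a b u : ℝ) :
    HasDerivAt (fun v : ℝ => (if v < 0 then a else b) * v ^ 2)
      (2 * ((if u < 0 then a else b) * u)) u := by
  rcases lt_trichotomy u 0 with hu | rfl | hu
  · refine (hasDerivAt_const_mul_sq a u).congr_of_eventuallyEq ?_ |>.congr_deriv (by simp [hu])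
    filter_upwards [eventually_lt_nhds hu] with v hv
    simp [hv]
  · have hleft : HasDerivWithinAt (fun v : ℝ => (if v < 0 then a else b) * v ^ 2) 0
        (Set.Iic 0) 0 := by
      refine ((hasDerivAt_const_mul_sq a 0).hasDerivWithinAt.congr_of_mem ?_ (by simp)).congr_deriv
        (by simp)
      intro v hv
      rcases (Set.mem_Iic.mp hv).lt_or_eq with hv | rfl <;> simp [*]
    have hright : HasDerivWithinAt (fun v : ℝ => (if v < 0 then a else b) * v ^ 2) 0
        (Set.Ici 0) 0 :=
      ((hasDerivAt_const_mul_sq b 0).hasDerivWithinAt.congr_of_mem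
        (fun v hv => by simp [not_lt.mpr (Set.mem_Ici.mp hv)]) (by simp)).congr_deriv (by simp)
    simpa [Set.Iic_union_Ici] using hleft.union hright
  · refine (hasDerivAt_const_mul_sq b u).congr_of_eventuallyEq ?_ |>.congr_deriv
      (by simp [hu.not_gt])
    filter_upwards [eventually_gt_nhds hu] with v hv
    simp [hv.not_gt]

theorem expectileLoss_hasDerivAt_general {ι : Type*} [Fintype ι] (τ : ℝ)
    (w x : ι → ℝ) :
    (∀ y : ℝ, HasDerivAt (expectileLoss τ w x)
      (-2 * ∑ i, w i * (|τ - (if x i < y then (1 : ℝ) else 0)| * (x i - y))) y) ∧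
    Differentiable ℝ (expectileLoss τ w x) := by
  have hderiv : ∀ y : ℝ, HasDerivAt (expectileLoss τ w x)
      (-2 * ∑ i, w i * (|τ - (if x i < y then (1 : ℝ) else 0)| * (x i - y))) y := by
    intro y
    have hterm : ∀ i, HasDerivAt
        (fun z : ℝ => w i * (|τ - (if x i - z < 0 then (1 : ℝ) else 0)| * (x i - z) ^ 2))
        (w i * (2 * (|τ - (if x i - y < 0 then (1 : ℝ) else 0)| * (x i - y)) * -1)) y := by
      intro i
      simp only [apply_ite (fun t : ℝ => |τ - t|)]
      exact ((hasDerivAt_ite_neg_mul_sq _ _ (x i - y)).comp y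
        ((hasDerivAt_id y).const_sub (x i))).const_mul (w i)
    refine (HasDerivAt.fun_sum (u := univ) fun i _ => hterm i).congr_deriv ?_
    simp only [sub_neg, Finset.mul_sum]
    exact Finset.sum_congr rfl fun i _ => by ring
  exact ⟨hderiv, fun y => (hderiv y).differentiableAt⟩

/-- For every `y ∈ ℝ`, the expectile loss is differentiable at `y` with derivative
`-2 * ∑ i, w i * |τ - 1{x i < y}| * (x i - y)`; in particular it is differentiable on ℝ. -/
theorem expectileLoss_hasDerivAt {ι : Type*} [Fintype ι] (τ : ℝ) (hτ : τ ∈ Set.Ioo (0 : ℝ) 1)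
    (w x : ι → ℝ) (hw : ∀ i, 0 ≤ w i) :
    (∀ y : ℝ, HasDerivAt (expectileLoss τ w x)
      (-2 * ∑ i, w i * (|τ - (if x i < y then (1 : ℝ) else 0)| * (x i - y))) y) ∧
    Differentiable ℝ (expectileLoss τ w x) :=
  expectileLoss_hasDerivAt_general τ w x
end

section
/- Assume additionally that ∑ᵢ wᵢ = 1. A real number y minimizes the expectile loss g over ℝ (i.e., g(y) ≤ g(z) for all z ∈ ℝ) if and only if y satisfies the first-order condition τ·∑ᵢ wᵢ·max(xᵢ − y, 0) = (1 − τ)·∑ᵢ wᵢ·max(y − xᵢ, 0). -/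
/-!
Each summand `L₂^τ` of the expectile loss is a quadratic spline with slope
`L' u = 2 (τ u⁺ - (1 - τ) u⁻)`, and it lies between its tangent line at `u` and that tangent
line plus `(v - u)²`. Summing with the weights sandwiches `g` between its tangent line at `y`
with slope `c = -∑ wᵢ L' (xᵢ - y)` and that line plus `(∑ wᵢ) (z - y)²`. The lower bound shows
that `c = 0` makes `y` a minimizer; the upper bound, evaluated a short step from `y` against the
slope, shows that a minimizer has `c = 0`. Finally `c = 0` is the first-order condition.
-/

open Finset

theorem forall_le_iff_eq_zero_of_le_of_le {f : ℝ → ℝ} {y c K : ℝ} (hK : 0 ≤ K)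
    (hlower : ∀ z, f y + c * (z - y) ≤ f z)
    (hupper : ∀ z, f z ≤ f y + c * (z - y) + K * (z - y) ^ 2) :
    (∀ z, f y ≤ f z) ↔ c = 0 := by
  refine ⟨fun hmin => ?_, fun hc z => by simpa [hc] using hlower z⟩
  have hK1 : K + 1 ≠ 0 := by positivity
  -- this step makes the upper bound exactly `f y - (c / (K + 1))²`
  have key : c * (y - c / (K + 1) - y) + K * (y - c / (K + 1) - y) ^ 2 = -(c / (K + 1)) ^ 2 := by
    field_simp
    ring
  have hsq : (c / (K + 1)) ^ 2 ≤ 0 := by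
    linarith [(hmin (y - c / (K + 1))).trans (hupper (y - c / (K + 1)))]
  simpa [hK1] using le_antisymm hsq (sq_nonneg _)

theorem sq_max_zero_add_two_mul_le (t s : ℝ) :
    max t 0 ^ 2 + 2 * max t 0 * (s - t) ≤ max s 0 ^ 2 := by
  rcases max_cases t 0 with ⟨ht, ht'⟩ | ⟨ht, ht'⟩ <;>
    rcases max_cases s 0 with ⟨hs, hs'⟩ | ⟨hs, hs'⟩ <;> rw [ht, hs] <;>
    nlinarith [sq_nonneg (s - t)]

theorem sq_max_zero_le_add_two_mul_add_sq (t s : ℝ) :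
    max s 0 ^ 2 ≤ max t 0 ^ 2 + 2 * max t 0 * (s - t) + (s - t) ^ 2 := by
  rcases max_cases t 0 with ⟨ht, ht'⟩ | ⟨ht, ht'⟩ <;>
    rcases max_cases s 0 with ⟨hs, hs'⟩ | ⟨hs, hs'⟩ <;> rw [ht, hs] <;>
    nlinarith [sq_nonneg (s - t)]

noncomputable def asymSqLoss (τ u : ℝ) : ℝ :=
  |τ - (if u < 0 then (1 : ℝ) else 0)| * u ^ 2

def asymSqLossDeriv (τ u : ℝ) : ℝ :=
  2 * (τ * max u 0 - (1 - τ) * max (-u) 0)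

section AsymSqLoss

variable {τ : ℝ}

theorem asymSqLoss_eq (hτ0 : 0 ≤ τ) (hτ1 : τ ≤ 1) (u : ℝ) :
    asymSqLoss τ u = τ * max u 0 ^ 2 + (1 - τ) * max (-u) 0 ^ 2 := by
  unfold asymSqLoss
  rcases lt_or_ge u 0 with hu | hu
  · rw [if_pos hu, max_eq_right hu.le, max_eq_left (by linarith), abs_of_nonpos (by linarith)]
    ring
  · rw [if_neg (not_lt.mpr hu), max_eq_left hu, max_eq_right (by linarith), sub_zero,
      abs_of_nonneg hτ0]
    ring

theorem asymSqLoss_add_deriv_mul_le (hτ0 : 0 ≤ τ) (hτ1 : τ ≤ 1) (u v : ℝ) :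
    asymSqLoss τ u + asymSqLossDeriv τ u * (v - u) ≤ asymSqLoss τ v := by
  rw [asymSqLoss_eq hτ0 hτ1, asymSqLoss_eq hτ0 hτ1, asymSqLossDeriv]
  have hpos := mul_le_mul_of_nonneg_left (sq_max_zero_add_two_mul_le u v) hτ0
  have hneg := mul_le_mul_of_nonneg_left (sq_max_zero_add_two_mul_le (-u) (-v))
    (sub_nonneg.mpr hτ1)
  linear_combination hpos + hneg

theorem asymSqLoss_le_add_deriv_mul_add_sq (hτ0 : 0 ≤ τ) (hτ1 : τ ≤ 1) (u v : ℝ) :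
    asymSqLoss τ v ≤ asymSqLoss τ u + asymSqLossDeriv τ u * (v - u) + (v - u) ^ 2 := by
  rw [asymSqLoss_eq hτ0 hτ1, asymSqLoss_eq hτ0 hτ1, asymSqLossDeriv]
  have hpos := mul_le_mul_of_nonneg_left (sq_max_zero_le_add_two_mul_add_sq u v) hτ0
  have hneg := mul_le_mul_of_nonneg_left (sq_max_zero_le_add_two_mul_add_sq (-u) (-v))
    (sub_nonneg.mpr hτ1)
  linear_combination hpos + hneg

end AsymSqLoss

section ExpectileLoss

variable {ι : Type*} [Fintype ι] {τ : ℝ} {w : ι → ℝ}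

theorem expectileLoss_eq_sum_asymSqLoss (x : ι → ℝ) (y : ℝ) :
    expectileLoss τ w x y = ∑ i, w i * asymSqLoss τ (x i - y) :=
  rfl

theorem sum_mul_asymSqLossDeriv (x : ι → ℝ) (y : ℝ) :
    ∑ i, w i * asymSqLossDeriv τ (x i - y)
      = 2 * (τ * ∑ i, w i * max (x i - y) 0 - (1 - τ) * ∑ i, w i * max (y - x i) 0) := by
  simp only [asymSqLossDeriv, neg_sub, mul_sum, ← sum_sub_distrib]
  exact sum_congr rfl fun i _ => by ring

theorem expectileLoss_add_mul_le (hτ0 : 0 ≤ τ) (hτ1 : τ ≤ 1) (hw : ∀ i, 0 ≤ w i)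
    (x : ι → ℝ) (y z : ℝ) :
    expectileLoss τ w x y + -(∑ i, w i * asymSqLossDeriv τ (x i - y)) * (z - y)
      ≤ expectileLoss τ w x z := by
  rw [expectileLoss_eq_sum_asymSqLoss, expectileLoss_eq_sum_asymSqLoss, neg_mul, sum_mul,
    ← sum_neg_distrib, ← sum_add_distrib]
  refine sum_le_sum fun i _ => ?_
  have h := mul_le_mul_of_nonneg_left
    (asymSqLoss_add_deriv_mul_le hτ0 hτ1 (x i - y) (x i - z)) (hw i)
  linear_combination h

theorem expectileLoss_le_add_mul_add_sq (hτ0 : 0 ≤ τ) (hτ1 : τ ≤ 1) (hw : ∀ i, 0 ≤ w i)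
    (x : ι → ℝ) (y z : ℝ) :
    expectileLoss τ w x z
      ≤ expectileLoss τ w x y + -(∑ i, w i * asymSqLossDeriv τ (x i - y)) * (z - y)
        + (∑ i, w i) * (z - y) ^ 2 := by
  rw [expectileLoss_eq_sum_asymSqLoss, expectileLoss_eq_sum_asymSqLoss, neg_mul, sum_mul,
    sum_mul, ← sum_neg_distrib, ← sum_add_distrib, ← sum_add_distrib]
  refine sum_le_sum fun i _ => ?_
  have h := mul_le_mul_of_nonneg_left
    (asymSqLoss_le_add_deriv_mul_add_sq hτ0 hτ1 (x i - y) (x i - z)) (hw i)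
  linear_combination h

end ExpectileLoss

theorem expectileLoss_isMin_iff_foc_general {ι : Type*} [Fintype ι] (τ : ℝ)
    (hτ : τ ∈ Set.Ioo (0 : ℝ) 1) (w x : ι → ℝ) (hw : ∀ i, 0 ≤ w i)
    (y : ℝ) :
    (∀ z : ℝ, expectileLoss τ w x y ≤ expectileLoss τ w x z) ↔
      τ * ∑ i, w i * max (x i - y) 0 = (1 - τ) * ∑ i, w i * max (y - x i) 0 := by
  obtain ⟨hτ0, hτ1⟩ := hτ
  rw [forall_le_iff_eq_zero_of_le_of_le (sum_nonneg fun i _ => hw i)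
    (expectileLoss_add_mul_le hτ0.le hτ1.le hw x y)
    (expectileLoss_le_add_mul_add_sq hτ0.le hτ1.le hw x y), neg_eq_zero, sum_mul_asymSqLossDeriv]
  constructor <;> intro h <;> linarith

/-- With weights summing to one, `y` minimizes the expectile loss iff it satisfies
the first-order condition
`τ * ∑ i, w i * max (x i - y) 0 = (1 - τ) * ∑ i, w i * max (y - x i) 0`. -/
theorem expectileLoss_isMin_iff_foc {ι : Type*} [Fintype ι] (τ : ℝ)
    (hτ : τ ∈ Set.Ioo (0 : ℝ) 1) (w x : ι → ℝ) (hw : ∀ i, 0 ≤ w i)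
    (hw1 : ∑ i, w i = 1) (y : ℝ) :
    (∀ z : ℝ, expectileLoss τ w x y ≤ expectileLoss τ w x z) ↔
      τ * ∑ i, w i * max (x i - y) 0 = (1 - τ) * ∑ i, w i * max (y - x i) 0 :=
  expectileLoss_isMin_iff_foc_general τ hτ w x hw y
end

section
/- There exists a unique y ∈ ℝ satisfying the τ-expectile FOC for (w, x). -/
open Finset

/-- `y` satisfies the τ-expectile first-order condition (FOC) for weights `w` and values `x`. -/
def ExpectileFOC {ι : Type*} [Fintype ι] (τ : ℝ) (w x : ι → ℝ) (y : ℝ) : Prop :=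
  τ * ∑ i, w i * max (x i - y) 0 = (1 - τ) * ∑ i, w i * max (y - x i) 0

/-!
The FOC says that `y` is a zero of `y ↦ ∑ᵢ wᵢ g(xᵢ - y)`, where
`g t = τ max(t, 0) + (1 - τ) min(t, 0)` is continuous, strictly increasing and vanishes at `0`.
That sum is therefore continuous and strictly decreasing in `y` (some weight is positive),
nonnegative at `minᵢ xᵢ` and nonpositive at `maxᵢ xᵢ`, so it has exactly one zero.
-/

/-- The derivative of the τ-expectile loss `t ↦ |τ - 𝟙(t < 0)| t² / 2`. -/
def expectileScore (τ t : ℝ) : ℝ :=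
  τ * max t 0 + (1 - τ) * min t 0

lemma expectileScore_zero (τ : ℝ) : expectileScore τ 0 = 0 := by
  simp [expectileScore]

lemma continuous_expectileScore (τ : ℝ) : Continuous (expectileScore τ) := by
  unfold expectileScore
  fun_prop

lemma strictMono_expectileScore {τ : ℝ} (hτ : τ ∈ Set.Ioo (0 : ℝ) 1) :
    StrictMono (expectileScore τ) := by
  intro a b hab
  have hmax : max a 0 ≤ max b 0 := max_le_max_right 0 hab.le
  have hmin : min a 0 ≤ min b 0 := min_le_min_right 0 hab.le
  -- `min t 0 + max t 0 = t`, so one of the two parts increases strictly.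
  have hsum : min a 0 + max a 0 < min b 0 + max b 0 := by
    rwa [min_add_max, min_add_max, add_zero, add_zero]
  unfold expectileScore
  rcases hmax.lt_or_eq with hlt | heq
  · have := mul_pos hτ.1 (sub_pos.2 hlt)
    have := mul_nonneg (sub_nonneg.2 hτ.2.le) (sub_nonneg.2 hmin)
    linarith
  · have := mul_pos (sub_pos.2 hτ.2) (show 0 < min b 0 - min a 0 by linarith)
    rw [heq]
    linarith

lemma expectileFOC_iff {ι : Type*} [Fintype ι] (τ : ℝ) (w x : ι → ℝ) (y : ℝ) :
    ExpectileFOC τ w x y ↔ ∑ i, w i * expectileScore τ (x i - y) = 0 := by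
  have hsum : ∑ i, w i * expectileScore τ (x i - y) =
      τ * ∑ i, w i * max (x i - y) 0 - (1 - τ) * ∑ i, w i * max (y - x i) 0 := by
    simp only [mul_sum, ← sum_sub_distrib]
    refine sum_congr rfl fun i _ => ?_
    rw [expectileScore, ← neg_sub (x i), ← neg_zero, max_neg_neg, neg_zero]
    ring
  rw [hsum, sub_eq_zero, ExpectileFOC]

section WeightedZero

variable {ι : Type*} [Fintype ι] {g : ℝ → ℝ} {w : ι → ℝ} (x : ι → ℝ)

lemma strictAnti_sum_mul_sub (hg : StrictMono g) (hw : ∀ i, 0 ≤ w i) (hpos : ∃ i, 0 < w i) :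
    StrictAnti fun y => ∑ i, w i * g (x i - y) := by
  obtain ⟨i₀, hi₀⟩ := hpos
  intro y₁ y₂ hy
  refine sum_lt_sum (fun i _ => ?_) ⟨i₀, mem_univ i₀, ?_⟩
  · exact mul_le_mul_of_nonneg_left (hg.monotone (by linarith)) (hw i)
  · exact mul_lt_mul_of_pos_left (hg (by linarith)) hi₀

lemma exists_sum_mul_sub_eq_zero (hg : Monotone g) (hgc : Continuous g) (hg0 : g 0 = 0)
    (hw : ∀ i, 0 ≤ w i) [Nonempty ι] :
    ∃ y, ∑ i, w i * g (x i - y) = 0 := by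
  obtain ⟨imin, himin⟩ := Finite.exists_min x
  obtain ⟨imax, himax⟩ := Finite.exists_max x
  have hF : Continuous fun y => ∑ i, w i * g (x i - y) := by fun_prop
  have hFmin : 0 ≤ ∑ i, w i * g (x i - x imin) :=
    sum_nonneg fun i _ => mul_nonneg (hw i) (hg0 ▸ hg (by linarith [himin i]))
  have hFmax : ∑ i, w i * g (x i - x imax) ≤ 0 :=
    sum_nonpos fun i _ => mul_nonpos_of_nonneg_of_nonpos (hw i) (hg0 ▸ hg (by linarith [himax i]))
  obtain ⟨y, -, hy⟩ := intermediate_value_Icc' (himin imax) hF.continuousOn ⟨hFmax, hFmin⟩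
  exact ⟨y, hy⟩

lemma existsUnique_sum_mul_sub_eq_zero (hg : StrictMono g) (hgc : Continuous g) (hg0 : g 0 = 0)
    (hw : ∀ i, 0 ≤ w i) (hpos : ∃ i, 0 < w i) :
    ∃! y, ∑ i, w i * g (x i - y) = 0 := by
  have : Nonempty ι := hpos.nonempty
  obtain ⟨y, hy⟩ := exists_sum_mul_sub_eq_zero x hg.monotone hgc hg0 hw
  exact ⟨y, hy, fun z hz => (strictAnti_sum_mul_sub x hg hw hpos).injective (hz.trans hy.symm)⟩

end WeightedZero

/-- There exists a unique `y ∈ ℝ` satisfying the τ-expectile FOC for `(w, x)`. -/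
theorem expectileFOC_existsUnique {ι : Type*} [Fintype ι] (τ : ℝ)
    (hτ : τ ∈ Set.Ioo (0 : ℝ) 1) (w x : ι → ℝ) (hw : ∀ i, 0 ≤ w i)
    (hw1 : ∑ i, w i = 1) :
    ∃! y : ℝ, ExpectileFOC τ w x y := by
  have hpos : ∃ i, 0 < w i := by
    by_contra! h
    linarith [sum_nonpos fun i (_ : i ∈ univ) => h i]
  simpa only [expectileFOC_iff] using
    existsUnique_sum_mul_sub_eq_zero x (strictMono_expectileScore hτ)
      (continuous_expectileScore τ) (expectileScore_zero τ) hw hpos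
end

section
/- Let 0 < τ₁ ≤ τ₂ < 1. If y₁ satisfies the τ₁-expectile FOC for (w, x) and y₂ satisfies the τ₂-expectile FOC for (w, x), then y₁ ≤ y₂; that is, the τ-expectile is monotonically non-decreasing in τ. -/
/-! The residual `τ·E[(x - y)⁺] - (1 - τ)·E[(y - x)⁺]` of the first-order condition is
non-decreasing in `τ`, because the two expectations are non-negative, and strictly decreasing in
`y` for `0 < τ < 1`, because the upper part falls and the lower part rises with `y`, at a combined
rate equal to the total weight. So if `y₂ < y₁`, the residual of `τ₁` at `y₂` would be both
positive and at most the residual of `τ₂` at `y₂`, which is zero. -/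

open Finset

section ExpectileGap

variable {ι : Type*} [Fintype ι]

def expectileGap (τ : ℝ) (w x : ι → ℝ) (y : ℝ) : ℝ :=
  τ * ∑ i, w i * max (x i - y) 0 - (1 - τ) * ∑ i, w i * max (y - x i) 0

theorem expectileFOC_iff_expectileGap_eq_zero {τ : ℝ} {w x : ι → ℝ} {y : ℝ} :
    ExpectileFOC τ w x y ↔ expectileGap τ w x y = 0 :=
  sub_eq_zero.symm

theorem sum_mul_max_sub_sub_sum_mul_max_sub (w x : ι → ℝ) (y : ℝ) :
    ∑ i, w i * max (x i - y) 0 - ∑ i, w i * max (y - x i) 0 = ∑ i, w i * x i - y * ∑ i, w i := by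
  have hpart : ∀ i, max (x i - y) 0 - max (y - x i) 0 = x i - y := fun i => by
    rcases le_total (x i) y with h | h <;> simp [h]
  simp only [← sum_sub_distrib, ← mul_sub, hpart, mul_sum]
  exact sum_congr rfl fun i _ => by ring

variable {w : ι → ℝ}

theorem antitone_sum_mul_max_sub (hw : ∀ i, 0 ≤ w i) (x : ι → ℝ) :
    Antitone fun y => ∑ i, w i * max (x i - y) 0 := fun _ _ hyy' =>
  sum_le_sum fun i _ => mul_le_mul_of_nonneg_left (max_le_max (by linarith) le_rfl) (hw i)

theorem monotone_sum_mul_max_sub (hw : ∀ i, 0 ≤ w i) (x : ι → ℝ) :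
    Monotone fun y => ∑ i, w i * max (y - x i) 0 := fun _ _ hyy' =>
  sum_le_sum fun i _ => mul_le_mul_of_nonneg_left (max_le_max (by linarith) le_rfl) (hw i)

theorem expectileGap_mono_left (hw : ∀ i, 0 ≤ w i) (x : ι → ℝ) (y : ℝ) :
    Monotone fun τ => expectileGap τ w x y := fun τ τ' hττ' => by
  have hA : 0 ≤ ∑ i, w i * max (x i - y) 0 :=
    sum_nonneg fun i _ => mul_nonneg (hw i) (le_max_right _ _)
  have hB : 0 ≤ ∑ i, w i * max (y - x i) 0 :=
    sum_nonneg fun i _ => mul_nonneg (hw i) (le_max_right _ _)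
  simp only [expectileGap]
  nlinarith

theorem expectileGap_strictAnti {τ : ℝ} (hτ₀ : 0 < τ) (hτ₁ : τ < 1) (hw : ∀ i, 0 ≤ w i)
    (hw₀ : 0 < ∑ i, w i) (x : ι → ℝ) : StrictAnti (expectileGap τ w x) := fun y y' hyy' => by
  set a := ∑ i, w i * max (x i - y) 0 - ∑ i, w i * max (x i - y') 0
  set b := ∑ i, w i * max (y' - x i) 0 - ∑ i, w i * max (y - x i) 0
  have ha : 0 ≤ a := sub_nonneg.2 (antitone_sum_mul_max_sub hw x hyy'.le)
  have hb : 0 ≤ b := sub_nonneg.2 (monotone_sum_mul_max_sub hw x hyy'.le)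
  have hab : a + b = (y' - y) * ∑ i, w i := by
    linarith [sum_mul_max_sub_sub_sum_mul_max_sub w x y, sum_mul_max_sub_sub_sum_mul_max_sub w x y']
  have hab_pos : 0 < a + b := hab ▸ mul_pos (sub_pos.2 hyy') hw₀
  have hgap : expectileGap τ w x y - expectileGap τ w x y' = τ * a + (1 - τ) * b := by
    simp only [expectileGap, a, b]; ring
  have hconvex : 0 < τ * a + (1 - τ) * b := by
    rcases le_total τ (1 / 2) with h | h <;> nlinarith
  linarith

end ExpectileGap

/-- The τ-expectile is monotonically non-decreasing in τ. -/
theorem expectile_mono_in_tau {ι : Type*} [Fintype ι] (τ₁ τ₂ : ℝ)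
    (hτ₁ : 0 < τ₁) (hτ₁₂ : τ₁ ≤ τ₂) (hτ₂ : τ₂ < 1)
    (w x : ι → ℝ) (hw : ∀ i, 0 ≤ w i) (hw1 : ∑ i, w i = 1)
    (y₁ y₂ : ℝ) (h₁ : ExpectileFOC τ₁ w x y₁) (h₂ : ExpectileFOC τ₂ w x y₂) :
    y₁ ≤ y₂ := by
  rw [expectileFOC_iff_expectileGap_eq_zero] at h₁ h₂
  by_contra! hlt
  have hgap_lt : expectileGap τ₁ w x y₁ < expectileGap τ₁ w x y₂ :=
    expectileGap_strictAnti hτ₁ (hτ₁₂.trans_lt hτ₂) hw (hw1 ▸ one_pos) x hlt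
  have hgap_le : expectileGap τ₁ w x y₂ ≤ expectileGap τ₂ w x y₂ :=
    expectileGap_mono_left hw x y₂ hτ₁₂
  linarith
end

section
/- Let e : ℝ → ℝ be a function such that for every τ ∈ (0,1), e(τ) satisfies the τ-expectile FOC for (w, x). Then e(τ) converges to max_{i ∈ supp w} xᵢ as τ → 1 from the left (i.e., Tendsto e (𝓝[<] 1) (𝓝 (max over the support of w of x))). -/
open Finset Filter Topology

/-!
Write `A(y) = ∑ wᵢ (xᵢ - y)⁺` and `B(y) = ∑ wᵢ (y - xᵢ)⁺`, so that the FOC reads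
`τ A(y) = (1 - τ) B(y)`, and let `M = xᵢ₀` be the maximum of `x` over the support of `w`.
Above `M` the gain `A` vanishes while `B` is positive, so `e τ ≤ M`. Below `M`,
`τ wᵢ₀ (M - e τ) ≤ τ A(e τ) = (1 - τ) B(e τ) ≤ (1 - τ) B(M)`, and the right-hand side
tends to `0` as `τ → 1`.
-/

theorem Finset.filter_pos_nonempty_of_sum_pos {ι M : Type*} [AddCommMonoid M] [LinearOrder M]
    [AddLeftMono M] {s : Finset ι} {f : ι → M} (h : 0 < ∑ i ∈ s, f i) :
    (s.filter fun i => 0 < f i).Nonempty := by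
  obtain ⟨i, hi, hpos⟩ := exists_lt_of_sum_lt (f := fun _ => (0 : M)) (by simpa using h)
  exact ⟨i, mem_filter.2 ⟨hi, hpos⟩⟩

section Expectile

variable {ι : Type*} [Fintype ι] {w x : ι → ℝ} {τ y : ℝ}

theorem mul_le_sum_mul_max_zero (hw : ∀ i, 0 ≤ w i) (f : ι → ℝ) (i : ι) :
    w i * f i ≤ ∑ j, w j * max (f j) 0 :=
  calc w i * f i ≤ w i * max (f i) 0 := mul_le_mul_of_nonneg_left (le_max_left _ _) (hw i)
    _ ≤ ∑ j, w j * max (f j) 0 :=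
      single_le_sum (f := fun j => w j * max (f j) 0)
        (fun j _ => mul_nonneg (hw j) (le_max_right _ _)) (mem_univ i)

theorem sum_mul_max_sub_eq_zero (hw : ∀ i, 0 ≤ w i) (hy : ∀ i, 0 < w i → x i ≤ y) :
    ∑ i, w i * max (x i - y) 0 = 0 := by
  refine sum_eq_zero fun i _ => ?_
  rcases (hw i).eq_or_lt with hwi | hwi
  · rw [← hwi, zero_mul]
  · rw [max_eq_right (sub_nonpos.2 (hy i hwi)), mul_zero]

theorem ExpectileFOC.le_sup' (hw : ∀ i, 0 ≤ w i) (hτ : τ < 1) (hfoc : ExpectileFOC τ w x y)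
    (hne : (univ.filter fun i => 0 < w i).Nonempty) :
    y ≤ (univ.filter fun i => 0 < w i).sup' hne x := by
  obtain ⟨i₀, hi₀, hmax⟩ := exists_mem_eq_sup' hne x
  rw [hmax]
  by_contra! hlt
  have hgain : ∑ i, w i * max (x i - y) 0 = 0 := sum_mul_max_sub_eq_zero hw fun i hi =>
    (Finset.le_sup' x (mem_filter.2 ⟨mem_univ i, hi⟩)).trans (hmax ▸ hlt.le)
  have hloss : ∑ i, w i * max (y - x i) 0 = 0 := by
    rw [ExpectileFOC, hgain, mul_zero] at hfoc
    exact (mul_eq_zero.1 hfoc.symm).resolve_left (sub_ne_zero.2 hτ.ne')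
  have := mul_le_sum_mul_max_zero hw (fun i => y - x i) i₀
  have := mul_pos (mem_filter.1 hi₀).2 (sub_pos.2 hlt)
  linarith

theorem ExpectileFOC.sub_le_div (hw : ∀ i, 0 ≤ w i) (hτ₀ : 0 < τ) (hτ₁ : τ < 1)
    (hfoc : ExpectileFOC τ w x y) {z : ℝ} (hyz : y ≤ z) {i : ι} (hi : 0 < w i) :
    x i - y ≤ (1 - τ) * (∑ j, w j * max (z - x j) 0) / (τ * w i) := by
  rw [le_div_iff₀ (mul_pos hτ₀ hi)]
  calc (x i - y) * (τ * w i) = τ * (w i * (x i - y)) := by ring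
    _ ≤ τ * ∑ j, w j * max (x j - y) 0 :=
      mul_le_mul_of_nonneg_left (mul_le_sum_mul_max_zero hw (fun j => x j - y) i) hτ₀.le
    _ = (1 - τ) * ∑ j, w j * max (y - x j) 0 := hfoc
    _ ≤ (1 - τ) * ∑ j, w j * max (z - x j) 0 := by
      refine mul_le_mul_of_nonneg_left (sum_le_sum fun j _ => ?_) (sub_nonneg.2 hτ₁.le)
      exact mul_le_mul_of_nonneg_left (by gcongr) (hw j)

end Expectile

/-- As `τ → 1⁻`, the τ-expectile converges to the maximum of the values over the support
of the weights. -/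
theorem expectile_tendsto_max {ι : Type*} [Fintype ι]
    (w x : ι → ℝ) (hw : ∀ i, 0 ≤ w i) (hw1 : ∑ i, w i = 1)
    (e : ℝ → ℝ) (he : ∀ τ ∈ Set.Ioo (0 : ℝ) 1, ExpectileFOC τ w x (e τ)) :
    ∃ hne : (Finset.univ.filter fun i => 0 < w i).Nonempty,
      Tendsto e (𝓝[<] (1 : ℝ))
        (𝓝 ((Finset.univ.filter fun i => 0 < w i).sup' hne x)) := by
  have hne := filter_pos_nonempty_of_sum_pos (hw1 ▸ one_pos : 0 < ∑ i, w i)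
  refine ⟨hne, ?_⟩
  obtain ⟨i₀, hi₀, hmax⟩ := exists_mem_eq_sup' hne x
  have hw₀ : 0 < w i₀ := (mem_filter.1 hi₀).2
  set M := (univ.filter fun i => 0 < w i).sup' hne x
  set C := ∑ j, w j * max (M - x j) 0
  have hlower : Tendsto (fun τ => M - (1 - τ) * C / (τ * w i₀)) (𝓝[<] 1) (𝓝 M) := by
    have : ContinuousAt (fun τ => M - (1 - τ) * C / (τ * w i₀)) 1 := by
      fun_prop (disch := simp [hw₀.ne'])
    simpa using this.tendsto.mono_left nhdsWithin_le_nhds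
  have hIoo : Set.Ioo (0 : ℝ) 1 ∈ 𝓝[<] 1 := Ioo_mem_nhdsLT zero_lt_one
  refine tendsto_of_tendsto_of_tendsto_of_le_of_le' hlower tendsto_const_nhds ?_ ?_
  · filter_upwards [hIoo] with τ hτ
    have := (he τ hτ).sub_le_div hw hτ.1 hτ.2 ((he τ hτ).le_sup' hw hτ.2 hne) hw₀
    linarith
  · filter_upwards [hIoo] with τ hτ using (he τ hτ).le_sup' hw hτ.2 hne
end

section
/- Let S be a finite nonempty type, 0 ≤ c < 1, and let T₁, T₂ : (S → ℝ) → (S → ℝ) be maps such that: T₂ is monotone (V ≤ W pointwise implies T₂ V ≤ T₂ W pointwise), T₂ is c-Lipschitz with respect to the sup norm ‖V‖∞ = max_{s} |V s|, and T₁ V ≤ T₂ V pointwise for every V : S → ℝ. If V₁ = T₁ V₁ and V₂ = T₂ V₂, then V₁ s ≤ V₂ s for every s ∈ S. -/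
/-!
Let `m ≥ 0` be the sup norm of `(V₁ - V₂)⁺`, so that `V₁ ≤ V₂ + m`. Applying `T₂` and using
`V₁ = T₁ V₁ ≤ T₂ V₁`, monotonicity and the contraction property gives `V₁ ≤ V₂ + c m`,
hence `m ≤ c m`, which forces `m = 0` because `c < 1`.
-/

open Finset

lemma sup'_abs_sub_eq_norm_sub {S : Type*} [Fintype S] [Nonempty S] (V W : S → ℝ) :
    univ.sup' univ_nonempty (fun s => |V s - W s|) = ‖V - W‖ :=
  le_antisymm (sup'_le _ _ fun s _ => norm_le_pi_norm (V - W) s)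
    ((pi_norm_le_iff_of_nonneg
        (le_sup'_of_le _ (mem_univ (Classical.arbitrary S)) (abs_nonneg _))).2
      fun s => le_sup' (fun s => |V s - W s|) (mem_univ s))

section MonotoneContraction

variable {S : Type*} [Fintype S] {T : (S → ℝ) → (S → ℝ)} {c : ℝ}

lemma apply_le_norm_posPart (f : S → ℝ) (s : S) : f s ≤ ‖f⁺‖ :=
  (le_posPart (f s)).trans ((Real.le_norm_self _).trans (norm_le_pi_norm f⁺ s))

lemma apply_add_const_le [Nonempty S] (hlip : ∀ V W, ‖T V - T W‖ ≤ c * ‖V - W‖)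
    (V : S → ℝ) {a : ℝ} (ha : 0 ≤ a) :
    T (V + fun _ => a) ≤ T V + fun _ => c * a := by
  intro s
  have hdist : ‖T (V + fun _ => a) - T V‖ ≤ c * a := by
    have := hlip (V + fun _ => a) V
    rwa [add_sub_cancel_left, pi_norm_const, Real.norm_of_nonneg ha] at this
  have hs := (le_abs_self _).trans ((norm_le_pi_norm _ s).trans hdist)
  simp only [Pi.add_apply, Pi.sub_apply] at hs ⊢
  linarith

theorem le_of_le_apply_of_apply_eq [Nonempty S] (hmono : Monotone T) (hc1 : c < 1)
    (hlip : ∀ V W, ‖T V - T W‖ ≤ c * ‖V - W‖) {U V : S → ℝ} (hU : U ≤ T U)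
    (hV : T V = V) : U ≤ V := by
  set m := ‖(U - V)⁺‖
  have hm0 : 0 ≤ m := norm_nonneg _
  have hUm : U ≤ V + fun _ => m := fun s => by
    have hs := apply_le_norm_posPart (U - V) s
    simp only [Pi.sub_apply] at hs
    simp only [Pi.add_apply]
    linarith
  have hUcm : U ≤ V + fun _ => c * m :=
    calc U ≤ T U := hU
      _ ≤ T (V + fun _ => m) := hmono hUm
      _ ≤ T V + fun _ => c * m := apply_add_const_le hlip V hm0
      _ = V + fun _ => c * m := by rw [hV]
  have hm : m ≤ (c * m)⁺ := (pi_norm_le_iff_of_nonneg (posPart_nonneg _)).2 fun s => by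
    rw [Pi.posPart_apply, Real.norm_of_nonneg (posPart_nonneg _)]
    exact posPart_mono (sub_le_iff_le_add'.2 (hUcm s))
  have hm_nonpos : m ≤ 0 := by
    rcases le_max_iff.1 hm with h | h <;> nlinarith
  intro s
  have hs := apply_le_norm_posPart (U - V) s
  simp only [Pi.sub_apply] at hs
  linarith

end MonotoneContraction

theorem fixedPoint_le_of_pointwise_le_general {S : Type*} [Fintype S] [Nonempty S]
    (c : ℝ) (hc1 : c < 1)
    (T₁ T₂ : (S → ℝ) → (S → ℝ))
    (hmono : ∀ V W : S → ℝ, (∀ s, V s ≤ W s) → ∀ s, T₂ V s ≤ T₂ W s)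
    (hlip : ∀ V W : S → ℝ,
      Finset.univ.sup' Finset.univ_nonempty (fun s => |T₂ V s - T₂ W s|) ≤
        c * Finset.univ.sup' Finset.univ_nonempty (fun s => |V s - W s|))
    (hle : ∀ V : S → ℝ, ∀ s, T₁ V s ≤ T₂ V s)
    (V₁ V₂ : S → ℝ) (h₁ : V₁ = T₁ V₁) (h₂ : V₂ = T₂ V₂) :
    ∀ s, V₁ s ≤ V₂ s := by
  have hlip' : ∀ V W, ‖T₂ V - T₂ W‖ ≤ c * ‖V - W‖ := fun V W => by
    simpa only [sup'_abs_sub_eq_norm_sub] using hlip V W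
  have hsub : V₁ ≤ T₂ V₁ := fun s => (congrFun h₁ s).trans_le (hle V₁ s)
  exact le_of_le_apply_of_apply_eq (fun V W h => hmono V W h) hc1 hlip' hsub h₂.symm

/-- If `T₂` is monotone and a `c`-contraction (`0 ≤ c < 1`) in the sup norm, and
`T₁ V ≤ T₂ V` pointwise for every `V`, then any fixed point of `T₁` is pointwise below
any fixed point of `T₂`. -/
theorem fixedPoint_le_of_pointwise_le {S : Type*} [Fintype S] [Nonempty S]
    (c : ℝ) (hc0 : 0 ≤ c) (hc1 : c < 1)
    (T₁ T₂ : (S → ℝ) → (S → ℝ))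
    (hmono : ∀ V W : S → ℝ, (∀ s, V s ≤ W s) → ∀ s, T₂ V s ≤ T₂ W s)
    (hlip : ∀ V W : S → ℝ,
      Finset.univ.sup' Finset.univ_nonempty (fun s => |T₂ V s - T₂ W s|) ≤
        c * Finset.univ.sup' Finset.univ_nonempty (fun s => |V s - W s|))
    (hle : ∀ V : S → ℝ, ∀ s, T₁ V s ≤ T₂ V s)
    (V₁ V₂ : S → ℝ) (h₁ : V₁ = T₁ V₁) (h₂ : V₂ = T₂ V₂) :
    ∀ s, V₁ s ≤ V₂ s :=
  fixedPoint_le_of_pointwise_le_general c hc1 T₁ T₂ hmono hlip hle V₁ V₂ h₁ h₂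
end

section
/- If Q_A : S → A → ℝ satisfies T_A Q_A = Q_A and Q : S → A → ℝ satisfies T Q = Q, then ‖Q_A − Q‖∞ ≤ γ·λ·‖Adv‖∞/(1 − γ). -/
open Finset

/-- The advantage-based Bellman operator:
`(T_A Q) s a = r s a + γ * ∑ s', P s a s' * ∑ a', π s' a' * (Q s' a' + λ * Adv s' a')`. -/
noncomputable def advBellman {S A : Type*} [Fintype S] [Fintype A]
    (γ lam : ℝ) (r : S → A → ℝ) (P : S → A → S → ℝ) (pol : S → A → ℝ)
    (Adv : S → A → ℝ) (Q : S → A → ℝ) : S → A → ℝ :=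
  fun s a => r s a + γ * ∑ s', P s a s' * ∑ a', pol s' a' * (Q s' a' + lam * Adv s' a')

/-- The standard Bellman operator:
`(T Q) s a = r s a + γ * ∑ s', P s a s' * ∑ a', π s' a' * Q s' a'`. -/
noncomputable def stdBellman {S A : Type*} [Fintype S] [Fintype A]
    (γ : ℝ) (r : S → A → ℝ) (P : S → A → S → ℝ) (pol : S → A → ℝ)
    (Q : S → A → ℝ) : S → A → ℝ :=
  fun s a => r s a + γ * ∑ s', P s a s' * ∑ a', pol s' a' * Q s' a'

/-- The sup norm `‖Q‖∞ = max_{(s,a)} |Q s a|`. -/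
noncomputable def supNorm {S A : Type*} [Fintype S] [Fintype A] [Nonempty S] [Nonempty A]
    (Q : S → A → ℝ) : ℝ :=
  Finset.univ.sup' Finset.univ_nonempty (fun p : S × A => |Q p.1 p.2|)

theorem abs_sum_mul_le_of_sum_eq_one {ι : Type*} (t : Finset ι) {w f : ι → ℝ} {c : ℝ}
    (hw0 : ∀ i ∈ t, 0 ≤ w i) (hw1 : ∑ i ∈ t, w i = 1) (hf : ∀ i ∈ t, |f i| ≤ c) :
    |∑ i ∈ t, w i * f i| ≤ c :=
  calc |∑ i ∈ t, w i * f i|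
      ≤ ∑ i ∈ t, w i * |f i| := by
        refine (abs_sum_le_sum_abs _ _).trans_eq (sum_congr rfl fun i hi => ?_)
        rw [abs_mul, abs_of_nonneg (hw0 i hi)]
    _ ≤ ∑ i ∈ t, w i * c := sum_le_sum fun i hi => mul_le_mul_of_nonneg_left (hf i hi) (hw0 i hi)
    _ = c := by rw [← sum_mul, hw1, one_mul]

section SupNorm

variable {S A : Type*} [Fintype S] [Fintype A] [Nonempty S] [Nonempty A]

theorem abs_le_supNorm (Q : S → A → ℝ) (s : S) (a : A) : |Q s a| ≤ supNorm Q :=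
  le_sup' (fun p : S × A => |Q p.1 p.2|) (mem_univ (s, a))

theorem supNorm_le {Q : S → A → ℝ} {c : ℝ} (h : ∀ s a, |Q s a| ≤ c) : supNorm Q ≤ c :=
  sup'_le _ _ fun p _ => h p.1 p.2

end SupNorm

section Bellman

variable {S A : Type*} [Fintype S] [Fintype A]

theorem advBellman_sub_stdBellman (γ lam : ℝ) (r : S → A → ℝ) (P : S → A → S → ℝ)
    (pol Adv Q₁ Q₂ : S → A → ℝ) (s : S) (a : A) :
    advBellman γ lam r P pol Adv Q₁ s a - stdBellman γ r P pol Q₂ s a =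
      γ * ∑ s', P s a s' * ∑ a', pol s' a' * (Q₁ s' a' - Q₂ s' a' + lam * Adv s' a') := by
  simp only [advBellman, stdBellman, add_sub_add_left_eq_sub, ← mul_sub, ← sum_sub_distrib]
  congr 1
  refine sum_congr rfl fun s' _ => congrArg _ (sum_congr rfl fun a' _ => by ring)

theorem abs_advBellman_sub_stdBellman_le [Nonempty S] [Nonempty A] {γ lam : ℝ} (hγ : 0 ≤ γ)
    (hlam : 0 ≤ lam) (r : S → A → ℝ) {P : S → A → S → ℝ} (hP0 : ∀ s a s', 0 ≤ P s a s')
    (hP1 : ∀ s a, ∑ s', P s a s' = 1) {pol : S → A → ℝ} (hpol0 : ∀ s a, 0 ≤ pol s a)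
    (hpol1 : ∀ s, ∑ a, pol s a = 1) (Adv Q₁ Q₂ : S → A → ℝ) (s : S) (a : A) :
    |advBellman γ lam r P pol Adv Q₁ s a - stdBellman γ r P pol Q₂ s a| ≤
      γ * (supNorm (fun s a => Q₁ s a - Q₂ s a) + lam * supNorm Adv) := by
  have hpointwise : ∀ s' a',
      |Q₁ s' a' - Q₂ s' a' + lam * Adv s' a'| ≤
        supNorm (fun s a => Q₁ s a - Q₂ s a) + lam * supNorm Adv := fun s' a' =>
    calc |Q₁ s' a' - Q₂ s' a' + lam * Adv s' a'|
        ≤ |Q₁ s' a' - Q₂ s' a'| + lam * |Adv s' a'| := by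
          simpa only [abs_mul, abs_of_nonneg hlam] using
            abs_add_le (Q₁ s' a' - Q₂ s' a') (lam * Adv s' a')
      _ ≤ _ := add_le_add (abs_le_supNorm (fun s a => Q₁ s a - Q₂ s a) s' a')
          (mul_le_mul_of_nonneg_left (abs_le_supNorm Adv s' a') hlam)
  rw [advBellman_sub_stdBellman, abs_mul, abs_of_nonneg hγ]
  refine mul_le_mul_of_nonneg_left ?_ hγ
  exact abs_sum_mul_le_of_sum_eq_one _ (fun s' _ => hP0 s a s') (hP1 s a) fun s' _ =>
    abs_sum_mul_le_of_sum_eq_one _ (fun a' _ => hpol0 s' a') (hpol1 s') fun a' _ =>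
      hpointwise s' a'

end Bellman

/-- The fixed points of the advantage-based and the standard Bellman operators differ by
at most `γ * λ * ‖Adv‖∞ / (1 - γ)` in sup norm. -/
theorem advBellman_fixedPoint_dist {S A : Type*} [Fintype S] [Fintype A]
    [Nonempty S] [Nonempty A]
    (γ : ℝ) (hγ : γ ∈ Set.Ioo (0 : ℝ) 1)
    (r : S → A → ℝ)
    (P : S → A → S → ℝ) (hP0 : ∀ s a s', 0 ≤ P s a s') (hP1 : ∀ s a, ∑ s', P s a s' = 1)
    (pol : S → A → ℝ) (hpol0 : ∀ s a, 0 ≤ pol s a) (hpol1 : ∀ s, ∑ a, pol s a = 1)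
    (Adv : S → A → ℝ) (lam : ℝ) (hlam : 0 ≤ lam)
    (QA Q : S → A → ℝ)
    (hQA : advBellman γ lam r P pol Adv QA = QA)
    (hQ : stdBellman γ r P pol Q = Q) :
    supNorm (fun s a => QA s a - Q s a) ≤ γ * lam * supNorm Adv / (1 - γ) := by
  obtain ⟨hγ0, hγ1⟩ := hγ
  have hcontract : supNorm (fun s a => QA s a - Q s a) ≤
      γ * (supNorm (fun s a => QA s a - Q s a) + lam * supNorm Adv) := supNorm_le fun s a => by
    have h := abs_advBellman_sub_stdBellman_le hγ0.le hlam r hP0 hP1 hpol0 hpol1 Adv QA Q s a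
    rwa [hQA, hQ] at h
  rw [le_div_iff₀ (sub_pos.mpr hγ1)]
  linarith
end
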